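/- If (a_n) and (a'_n) are increasing computable rational sequences converging to the same real A, and there exists c < 1 with A - a'_n < c(A - a_n) for all n, then A is computable (there is a computable function giving rational approximations of A to within any prescribed 2^{-k}). -/

import Mathlib

/-!
Since `a'` increases to `A`, rearranging `A - a'ₙ < c (A - aₙ)` gives
`A - a'ₙ < c / (1 - c) · (a'ₙ - aₙ)`: the observable gap `a'ₙ - aₙ` controls the error.
The gap tends to `0`, so an unbounded search for an `n` with `2ʲ⁺ᵏ (a'ₙ - aₙ) < 1`, where
`c / (1 - c) ≤ 2ʲ`, terminates, and then `a'ₙ` is within `2⁻ᵏ` of `A`. The search is effective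
because such comparisons of rationals reduce to integer arithmetic on numerators and
denominators, which is primitive recursive.
-/

open Filter Encodable

theorem Nat.gcd_eq_findGreatest (a b : ℕ) :
    a.gcd b = Nat.findGreatest (fun k => k ∣ a ∧ k ∣ b) (a + b) := by
  refine (Nat.findGreatest_eq_iff.2
    ⟨?_, fun _ => ⟨a.gcd_dvd_left b, a.gcd_dvd_right b⟩, ?_⟩).symm
  · rcases Nat.eq_zero_or_pos a with rfl | ha
    · simp
    · exact (Nat.gcd_le_left b ha).trans (Nat.le_add_right a b)
  · rintro n hlt hle ⟨hna, hnb⟩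
    rcases Nat.eq_zero_or_pos (a.gcd b) with h0 | hpos
    · rw [Nat.gcd_eq_zero_iff] at h0
      omega
    · exact absurd (Nat.le_of_dvd hpos (Nat.dvd_gcd hna hnb)) (not_le.2 hlt)

namespace Primrec

theorem intEquivNatSumNat : Primrec Equiv.intEquivNatSumNat :=
  encode_iff.1 <| Primrec.encode.of_eq fun z => by cases z <;> rfl

theorem intEquivNatSumNat_symm : Primrec Equiv.intEquivNatSumNat.symm :=
  encode_iff.1 <| Primrec.encode.of_eq fun s => by cases s <;> rfl

-- Integer arithmetic is reduced to `ℕ` through `z = z.toNat - (-z).toNat`.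

theorem int_toNat : Primrec Int.toNat :=
  (sumCasesOn intEquivNatSumNat snd.to₂ (const 0).to₂).of_eq fun z => by cases z <;> rfl

theorem int_neg_toNat : Primrec fun z : ℤ => (-z).toNat :=
  (sumCasesOn intEquivNatSumNat (const 0).to₂ (succ.comp snd).to₂).of_eq fun z => by
    rcases z with (_ | n) | n <;> rfl

theorem int_subNatNat : Primrec₂ Int.subNatNat :=
  (intEquivNatSumNat_symm.comp <| ite (nat_le.comp snd fst) (sumInl.comp (nat_sub.comp fst snd))
    (sumInr.comp (pred.comp (nat_sub.comp snd fst)))).of_eq fun ⟨m, n⟩ => by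
      rw [Int.subNatNat_eq_coe]
      split_ifs <;> simp [Equiv.intEquivNatSumNat, Int.negSucc_eq] <;> omega

theorem int_natCast : Primrec (Nat.cast : ℕ → ℤ) :=
  (int_subNatNat.comp .id (const 0)).of_eq fun n => by simp [Int.subNatNat_eq_coe]

theorem int_natAbs : Primrec Int.natAbs :=
  (nat_add.comp int_toNat int_neg_toNat).of_eq fun z => by omega

theorem int_sub : Primrec₂ ((· - ·) : ℤ → ℤ → ℤ) :=
  (int_subNatNat.comp (nat_add.comp (int_toNat.comp fst) (int_neg_toNat.comp snd))
    (nat_add.comp (int_neg_toNat.comp fst) (int_toNat.comp snd))).of_eq fun ⟨z, w⟩ => by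
      simp only [Int.subNatNat_eq_coe]; omega

theorem int_mul : Primrec₂ ((· * ·) : ℤ → ℤ → ℤ) := by
  have hpos := nat_add.comp (nat_mul.comp (int_toNat.comp fst) (int_toNat.comp snd))
    (nat_mul.comp (int_neg_toNat.comp fst) (int_neg_toNat.comp snd))
  have hneg := nat_add.comp (nat_mul.comp (int_toNat.comp fst) (int_neg_toNat.comp snd))
    (nat_mul.comp (int_neg_toNat.comp fst) (int_toNat.comp snd))
  refine (int_subNatNat.comp hpos hneg).of_eq fun ⟨z, w⟩ => ?_
  have hz : z = z.toNat - (-z).toNat := by omega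
  have hw : w = w.toNat - (-w).toNat := by omega
  simp only [Int.subNatNat_eq_coe]
  push_cast
  linear_combination (-w) * hz - ((z.toNat : ℤ) - (-z).toNat) * hw

theorem int_lt : PrimrecRel ((· < ·) : ℤ → ℤ → Prop) :=
  (nat_lt.comp (nat_add.comp (int_toNat.comp fst) (int_neg_toNat.comp snd))
    (nat_add.comp (int_toNat.comp snd) (int_neg_toNat.comp fst))).of_eq fun ⟨z, w⟩ => by
      omega

theorem nat_pow : Primrec₂ ((· ^ ·) : ℕ → ℕ → ℕ) :=
  Primrec₂.unpaired'.1 Nat.Primrec.pow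

theorem nat_dvd : PrimrecRel ((· ∣ ·) : ℕ → ℕ → Prop) :=
  (Primrec.eq.comp (nat_mod.comp snd fst) (const 0)).of_eq fun _ => Nat.dvd_iff_mod_eq_zero.symm

theorem nat_gcd : Primrec₂ Nat.gcd := by
  have hdvd : PrimrecRel fun (x : ℕ × ℕ) (k : ℕ) => k ∣ x.1 ∧ k ∣ x.2 :=
    (nat_dvd.comp snd (fst.comp fst)).and (nat_dvd.comp snd (snd.comp fst))
  exact (nat_findGreatest (nat_add.comp fst snd) hdvd).of_eq fun x =>
    (Nat.gcd_eq_findGreatest x.1 x.2).symm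

theorem nat_count {p : ℕ → Prop} [DecidablePred p] (hp : PrimrecPred p) :
    Primrec (Nat.count p) := by
  have hstep : Primrec₂ fun (n acc : ℕ) => acc + if p n then 1 else 0 :=
    nat_add.comp snd (ite (hp.comp fst) (const 1) (const 0))
  refine (nat_rec₁ 0 hstep).of_eq fun n => ?_
  induction n with
  | zero => rfl
  | succ n ih => rw [Nat.count_succ, ← ih]

end Primrec

theorem Computable.nat_nth {p : ℕ → Prop} [DecidablePred p] (hp : PrimrecPred p)
    (hinf : (Set.ofPred p).Infinite) : Computable (Nat.nth p) := by
  have hex (n : ℕ) : ∃ m, p m ∧ Nat.count p m = n :=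
    ⟨Nat.nth p n, Nat.nth_mem_of_infinite hinf n, Nat.count_nth_of_infinite hinf n⟩
  have hP : PrimrecPred fun x : ℕ × ℕ => p x.2 ∧ Nat.count p x.2 = x.1 :=
    (hp.comp Primrec.snd).and
      (Primrec.eq.comp ((Primrec.nat_count hp).comp Primrec.snd) Primrec.fst)
  refine (Computable.find hP.computablePred hex).of_eq fun n => ?_
  obtain ⟨hpm, hcount⟩ := Nat.find_spec (hex n)
  calc Nat.find (hex n) = Nat.nth p (Nat.count p (Nat.find (hex n))) :=
        (Nat.nth_count hpm).symm
    _ = Nat.nth p n := by rw [hcount]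

attribute [local instance] Encodable.decidableRangeEncode

theorem Denumerable.encode_ofEncodableOfInfinite {α : Type*} [Encodable α] [Infinite α]
    (a : α) :
    @encode α (Denumerable.ofEncodableOfInfinite α).toEncodable a =
      Nat.count (· ∈ Set.range (encode : α → ℕ)) (encode a) :=
  rfl

/- `ℚ` carries two encodings: `Primcodable ℚ` comes from `Denumerable ℚ`, which enumerates the
raw codes of `Rat.instEncodable` in increasing order. Below, `encode : ℚ → ℕ` is the raw code. -/

theorem Rat.encode_eq (q : ℚ) : encode q = Nat.pair (encode q.num) q.den :=
  rfl

theorem Rat.mem_range_encode_iff (m : ℕ) :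
    m ∈ Set.range (encode : ℚ → ℕ) ↔
      0 < m.unpair.2 ∧ (Denumerable.ofNat ℤ m.unpair.1).natAbs.gcd m.unpair.2 = 1 := by
  constructor
  · rintro ⟨q, rfl⟩
    rw [Rat.encode_eq, Nat.unpair_pair, Denumerable.ofNat_encode]
    exact ⟨q.pos, q.reduced⟩
  · rintro ⟨hd, hcop⟩
    refine ⟨Rat.mk' (Denumerable.ofNat ℤ m.unpair.1) m.unpair.2 hd.ne' hcop, ?_⟩
    show Nat.pair (encode (Denumerable.ofNat ℤ m.unpair.1)) m.unpair.2 = m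
    rw [Denumerable.encode_ofNat, Nat.pair_unpair]

open Primrec in
theorem Rat.primrecPred_mem_range_encode : PrimrecPred (· ∈ Set.range (encode : ℚ → ℕ)) := by
  have h := (nat_lt.comp (const 0) (snd.comp unpair)).and (Primrec.eq.comp
    (nat_gcd.comp (int_natAbs.comp ((Primrec.ofNat ℤ).comp (fst.comp unpair))) (snd.comp unpair))
    (const 1))
  exact h.of_eq fun m => (Rat.mem_range_encode_iff m).symm

theorem Rat.encode_ofNat_eq_nth (n : ℕ) :
    encode (Denumerable.ofNat ℚ n) = Nat.nth (· ∈ Set.range (encode : ℚ → ℕ)) n := by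
  have h : Nat.count (· ∈ Set.range (encode : ℚ → ℕ)) (encode (Denumerable.ofNat ℚ n)) = n :=
    (Denumerable.encode_ofEncodableOfInfinite _).symm.trans
      (Denumerable.encode_ofNat (α := ℚ) n)
  calc encode (Denumerable.ofNat ℚ n)
      = Nat.nth (· ∈ Set.range encode) (Nat.count (· ∈ Set.range encode)
          (encode (Denumerable.ofNat ℚ n))) := (Nat.nth_count ⟨_, rfl⟩).symm
    _ = Nat.nth (· ∈ Set.range encode) n := by rw [h]

theorem Rat.computable_encode : Computable (encode : ℚ → ℕ) :=
  ((Computable.nat_nth Rat.primrecPred_mem_range_encode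
    (Set.infinite_range_of_injective encode_injective)).comp Computable.encode).of_eq fun q => by
      rw [← Rat.encode_ofNat_eq_nth, Denumerable.ofNat_encode]

theorem Rat.computable_num : Computable Rat.num :=
  Computable.encode_iff.1 <|
    (Computable.fst.comp (Computable.unpair.comp Rat.computable_encode)).of_eq fun q => by
      rw [Rat.encode_eq, Nat.unpair_pair]

theorem Rat.computable_den : Computable Rat.den :=
  (Computable.snd.comp (Computable.unpair.comp Rat.computable_encode)).of_eq
    fun q => by rw [Rat.encode_eq, Nat.unpair_pair]

theorem Rat.two_pow_mul_sub_lt_one_iff (m : ℕ) (q r : ℚ) :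
    2 ^ m * (r - q) < 1 ↔
      ((2 ^ m : ℕ) : ℤ) * (r.num * q.den - q.num * r.den) < ((q.den * r.den : ℕ) : ℤ) := by
  have hden : (0 : ℚ) < q.den * r.den := by positivity
  rw [← @Int.cast_lt ℚ, ← mul_lt_mul_iff_of_pos_right hden]
  push_cast
  rw [← Rat.mul_den_eq_num q, ← Rat.mul_den_eq_num r]
  ring_nf

open Primrec in
theorem Rat.computablePred_two_pow_mul_sub_lt_one :
    ComputablePred fun p : ℕ × ℚ × ℚ => 2 ^ p.1 * (p.2.2 - p.2.1) < 1 := by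
  have hq : Computable fun p : ℕ × ℚ × ℚ => p.2.1 := Computable.fst.comp Computable.snd
  have hr : Computable fun p : ℕ × ℚ × ℚ => p.2.2 := Computable.snd.comp Computable.snd
  have hcast := int_natCast.to_comp
  have hpow : Computable fun p : ℕ × ℚ × ℚ => ((2 ^ p.1 : ℕ) : ℤ) :=
    hcast.comp (nat_pow.to_comp.comp (Computable.const 2) Computable.fst)
  have hlhs := int_mul.to_comp.comp hpow (int_sub.to_comp.comp
      (int_mul.to_comp.comp (Rat.computable_num.comp hr) (hcast.comp (Rat.computable_den.comp hq)))
      (int_mul.to_comp.comp (Rat.computable_num.comp hq) (hcast.comp (Rat.computable_den.comp hr))))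
  have hrhs := hcast.comp (nat_mul.to_comp.comp (Rat.computable_den.comp hq)
    (Rat.computable_den.comp hr))
  exact (Computable.computablePred (int_lt.decide.to_comp.comp hlhs hrhs)).of_eq fun p =>
    (Rat.two_pow_mul_sub_lt_one_iff p.1 p.2.1 p.2.2).symm

theorem StrictMono.lt_of_tendsto {α β : Type*} [TopologicalSpace α] [Preorder α]
    [OrderClosedTopology α] [SemilatticeSup β] [NoMaxOrder β] {f : β → α} {a : α}
    (hf : StrictMono f) (ha : Tendsto f atTop (nhds a)) (b : β) : f b < a :=
  let ⟨_, hb⟩ := exists_gt b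
  (hf hb).trans_le (hf.monotone.ge_of_tendsto ha _)

theorem sub_lt_mul_sub_of_lt_mul_sub {A x y c M : ℝ} (hc0 : 0 < c) (hc1 : c < 1) (hy : y < A)
    (h : A - y < c * (A - x)) (hM : c / (1 - c) ≤ M) : A - y < M * (y - x) := by
  have hgap : (1 - c) * (A - y) < c * (y - x) := by linarith
  have hxy : 0 < y - x := pos_of_mul_pos_right (by nlinarith) hc0.le
  calc A - y < c / (1 - c) * (y - x) := by
        rw [div_mul_eq_mul_div, lt_div_iff₀ (by linarith)]; linarith
    _ ≤ M * (y - x) := by gcongr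

theorem exists_two_pow_mul_sub_lt_one {a a' : ℕ → ℚ} {A : ℝ}
    (hA : Tendsto (fun n => (a n : ℝ)) atTop (nhds A))
    (hA' : Tendsto (fun n => (a' n : ℝ)) atTop (nhds A)) (m : ℕ) :
    ∃ n, 2 ^ m * (a' n - a n) < 1 := by
  have hlim : Tendsto (fun n => (a' n : ℝ) - a n) atTop (nhds 0) := by
    simpa using hA'.sub hA
  obtain ⟨n, hn⟩ := (hlim.eventually_lt_const (by positivity : (0 : ℝ) < (2 ^ m)⁻¹)).exists
  rw [← one_div, lt_div_iff₀' (by positivity)] at hn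
  exact ⟨n, by exact_mod_cast hn⟩

theorem computable_of_faster_sequence_general (a a' : ℕ → ℚ) (A : ℝ) (c : ℝ) (hc0 : 0 < c)
    (hc1 : c < 1)
    (ha : Computable a) (ha' : Computable a') (hma' : StrictMono a')
    (hA : Tendsto (fun n => (a n : ℝ)) atTop (nhds A))
    (hA' : Tendsto (fun n => (a' n : ℝ)) atTop (nhds A))
    (hfast : ∀ n, A - (a' n : ℝ) < c * (A - (a n : ℝ))) :
    ∃ g : ℕ → ℚ, Computable g ∧ ∀ k : ℕ, |A - (g k : ℝ)| ≤ (2 : ℝ)⁻¹ ^ k := by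
  obtain ⟨j, hj⟩ := pow_unbounded_of_one_lt (c / (1 - c)) (one_lt_two : (1 : ℝ) < 2)
  have hgap (k : ℕ) := exists_two_pow_mul_sub_lt_one hA hA' (j + k)
  have hargs : Computable fun p : ℕ × ℕ => (j + p.1, a p.2, a' p.2) :=
    (Primrec.nat_add.to_comp.comp (Computable.const j) Computable.fst).pair
      ((ha.comp Computable.snd).pair (ha'.comp Computable.snd))
  have hdecide := Rat.computablePred_two_pow_mul_sub_lt_one.decide.comp hargs
  have hsearch : ComputablePred fun p : ℕ × ℕ => 2 ^ (j + p.1) * (a' p.2 - a p.2) < 1 :=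
    Computable.computablePred hdecide
  have ha'A (n : ℕ) : (a' n : ℝ) < A := (Rat.cast_strictMono.comp hma').lt_of_tendsto hA' n
  refine ⟨fun k => a' (Nat.find (hgap k)), ha'.comp (Computable.find hsearch hgap), fun k => ?_⟩
  have hn := Nat.find_spec (hgap k)
  dsimp only
  generalize Nat.find (hgap k) = n at hn ⊢
  have hn' : (2 : ℝ) ^ j * (a' n - a n) * 2 ^ k < 1 := by
    rw [mul_right_comm, ← pow_add]; exact_mod_cast hn
  calc |A - a' n| = A - a' n := abs_of_pos (sub_pos.2 (ha'A n))
    _ ≤ 2 ^ j * (a' n - a n) :=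
        (sub_lt_mul_sub_of_lt_mul_sub hc0 hc1 (ha'A n) (hfast n) hj.le).le
    _ ≤ 2⁻¹ ^ k := by rw [inv_pow, ← one_div, le_div_iff₀ (by positivity)]; exact hn'.le

/-- If two increasing computable rational sequences converge to the same real `A` and one
converges strictly faster by a fixed factor `c < 1`, then `A` is computable: some computable
`g : ℕ → ℚ` approximates `A` to within `2⁻ᵏ`. -/
theorem computable_of_faster_sequence (a a' : ℕ → ℚ) (A : ℝ) (c : ℝ) (hc0 : 0 < c)
    (hc1 : c < 1)
    (ha : Computable a) (ha' : Computable a') (hma : StrictMono a) (hma' : StrictMono a')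
    (hA : Tendsto (fun n => (a n : ℝ)) atTop (nhds A))
    (hA' : Tendsto (fun n => (a' n : ℝ)) atTop (nhds A))
    (hfast : ∀ n, A - (a' n : ℝ) < c * (A - (a n : ℝ))) :
    ∃ g : ℕ → ℚ, Computable g ∧ ∀ k : ℕ, |A - (g k : ℝ)| ≤ (2 : ℝ)⁻¹ ^ k :=
  computable_of_faster_sequence_general a a' A c hc0 hc1 ha ha' hma' hA hA' hfast
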